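/- There exists a 3-agent cardinal hedonic game with deviator-resentful agents admitting an infinite sequence of individually rational contractual Nash deviations under additively separable aggregation. Concretely, with N = {a,b,c}, initial utilities u_a(b)=u_b(c)=u_c(a)=0 and u_b(a)=u_c(b)=u_a(c)=−1, the periodic sequence of partitions π^{3k}={{a,b},{c}}, π^{3k+1}={{a},{b,c}}, π^{3k+2}={{a,c},{b}} is an infinite execution of the individually rational CNS dynamics. -/

import Mathlib

/-- The partition at time `t` of the periodic sequence
`π^{3k} = {{a,b},{c}}`, `π^{3k+1} = {{a},{b,c}}`, `π^{3k+2} = {{a,c},{b}}`,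
given by the coalition of each agent (`a = 0`, `b = 1`, `c = 2`). -/
def coalOf (t : ℕ) (i : Fin 3) : Finset (Fin 3) :=
  if t % 3 = 0 then (if i = 2 then {2} else {0, 1})
  else if t % 3 = 1 then (if i = 0 then {0} else {1, 2})
  else (if i = 1 then {1} else {0, 2})

/-- The agent deviating at step `t` (the single-agent deviation turning the
partition at time `t - 1` into the one at time `t`): `b` at steps `≡ 1`,
`c` at steps `≡ 2`, `a` at steps `≡ 0 (mod 3)`. -/
def dev (t : ℕ) : Fin 3 :=
  if t % 3 = 1 then 1 else if t % 3 = 2 then 2 else 0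

/-- Initial utilities: `u_a(b) = u_b(c) = u_c(a) = 0`, `u_b(a) = u_c(b) = u_a(c) = -1`. -/
def u0 : Fin 3 → Fin 3 → ℚ := ![![0, 0, -1], ![-1, 0, 0], ![0, -1, 0]]

/-- Utilities evolving under deviator-resent: when an agent deviates, she
decreases her own utility for every agent of her abandoned coalition by `1`. -/
def util : ℕ → Fin 3 → Fin 3 → ℚ
  | 0 => u0
  | (t + 1) => fun i j =>
      if i = dev (t + 1) ∧ j ∈ coalOf t i ∧ j ≠ i then util t i j - 1
      else util t i j

/-! Agent `i` values `i + 1` at `0` and `i + 2` negatively. At every step the deviator `d` leaves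
her partner `d + 2` for the lone agent `d + 1`, and `d + 2`, now alone, loses only `d`, whom she
values at `0`. Resentment lowers only the deviator's utilities for the agents she leaves, which are
always disliked ones: the liked entries stay `0` and the disliked ones stay negative forever. -/

lemma erase_coalOf_dev (t : ℕ) :
    (coalOf t (dev (t + 1))).erase (dev (t + 1)) = {dev (t + 1) + 2} := by
  have : t % 3 < 3 := Nat.mod_lt _ three_pos
  interval_cases h : t % 3 <;> simp +decide [coalOf, dev, Nat.add_mod, h]

lemma erase_coalOf_succ_dev (t : ℕ) :
    (coalOf (t + 1) (dev (t + 1))).erase (dev (t + 1)) = {dev (t + 1) + 1} := by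
  have : t % 3 < 3 := Nat.mod_lt _ three_pos
  interval_cases h : t % 3 <;> simp +decide [coalOf, dev, Nat.add_mod, h]

lemma erase_coalOf_dev_add_two (t : ℕ) :
    (coalOf t (dev (t + 1) + 2)).erase (dev (t + 1) + 2) = {dev (t + 1) + 2 + 1} := by
  have : t % 3 < 3 := Nat.mod_lt _ three_pos
  interval_cases h : t % 3 <;> simp +decide [coalOf, dev, Nat.add_mod, h]

lemma coalOf_succ_dev_add_two (t : ℕ) :
    coalOf (t + 1) (dev (t + 1) + 2) = {dev (t + 1) + 2} := by
  have : t % 3 < 3 := Nat.mod_lt _ three_pos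
  interval_cases h : t % 3 <;> simp +decide [coalOf, dev, Nat.add_mod, h]

lemma util_succ_le (t : ℕ) : util (t + 1) ≤ util t := by
  intro i j
  simp only [util]
  split_ifs <;> linarith

lemma util_le_u0 (t : ℕ) : util t ≤ u0 :=
  antitone_nat_of_succ_le util_succ_le (Nat.zero_le t)

lemma util_add_two_neg (t : ℕ) (i : Fin 3) : util t i (i + 2) < 0 := by
  have hu0 : ∀ i, u0 i (i + 2) = -1 := by decide
  linarith [util_le_u0 t i (i + 2), hu0 i]

lemma util_add_one (t : ℕ) (i : Fin 3) : util t i (i + 1) = 0 := by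
  induction t with
  | zero => revert i; decide
  | succ t ih =>
    simp only [util]
    rw [if_neg, ih]
    rintro ⟨rfl, hmem, hne⟩
    have h : dev (t + 1) + 1 = dev (t + 1) + 2 := by
      simpa [erase_coalOf_dev] using Finset.mem_erase.2 ⟨hne, hmem⟩
    exact absurd (add_left_cancel h) (by decide)

/-- The periodic sequence of partitions is an infinite execution of the
individually rational contractual Nash dynamics for deviator-resentful agents
with additively separable utilities: at each step, the deviator strictly
improves her (current) utility, every agent of the abandoned coalition weakly
improves, and the deviator's new coalition is individually rational for her. -/
theorem stmt_12 :
    ∀ t : ℕ,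
      ((∑ j ∈ (coalOf t (dev (t + 1))).erase (dev (t + 1)), util t (dev (t + 1)) j) <
        ∑ j ∈ (coalOf (t + 1) (dev (t + 1))).erase (dev (t + 1)), util t (dev (t + 1)) j) ∧
      (∀ i ∈ coalOf t (dev (t + 1)), i ≠ dev (t + 1) →
        (∑ j ∈ (coalOf t i).erase i, util t i j) ≤
          ∑ j ∈ (coalOf (t + 1) i).erase i, util t i j) ∧
      0 ≤ ∑ j ∈ (coalOf (t + 1) (dev (t + 1))).erase (dev (t + 1)), util t (dev (t + 1)) j := by
  intro t
  simp only [erase_coalOf_dev, erase_coalOf_succ_dev, Finset.sum_singleton, util_add_one]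
  refine ⟨util_add_two_neg t _, ?_, le_rfl⟩
  intro i hi hne
  obtain rfl : i = dev (t + 1) + 2 := by
    simpa [erase_coalOf_dev] using Finset.mem_erase.2 ⟨hne, hi⟩
  simp [erase_coalOf_dev_add_two, coalOf_succ_dev_add_two, util_add_one]
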